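/- Let f : ℝⁿ → GL_k(ℝ) be smooth with |f(x)⁻¹ ∇f(x)| ≤ λ for all x. Then for all x, y with |x − y| ≤ 1/(2λ), one has |f(x)⁻¹ f(y) − I_k| ≤ 2λ|x − y|. -/

import Mathlib

/-!
Along the segment `t ↦ x + t • (y - x)` the curve `G t = f(x)⁻¹ f(x + t(y - x)) - I` starts at
`0`, and writing `f(x)⁻¹ = (G t + I) f(z)⁻¹` at `z = x + t(y - x)` shows `‖G'‖ ≤ a ‖G‖ + a`
with `a = λ |x - y|`. Grönwall gives `‖G 1‖ ≤ eᵃ - 1`, which is at most `2a` once `a ≤ 1/2`.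
-/

open Set

noncomputable def frob {k l : ℕ} (M : Matrix (Fin k) (Fin l) ℝ) : ℝ :=
  Real.sqrt (∑ i, ∑ j, (M i j) ^ 2)

open scoped Matrix.Norms.Frobenius

theorem frob_eq_norm {k l : ℕ} (M : Matrix (Fin k) (Fin l) ℝ) : frob M = ‖M‖ := by
  simp [frob, Matrix.frobenius_norm_def, Real.sqrt_eq_rpow]

theorem Matrix.hasDerivAt_of_hasDerivAt_apply {m n : Type*} [Fintype m] [Fintype n]
    {c : ℝ → Matrix m n ℝ} {c' : Matrix m n ℝ} {t : ℝ}
    (h : ∀ i j, HasDerivAt (fun s => c s i j) (c' i j) t) : HasDerivAt c c' t :=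
  hasDerivAt_pi.2 fun i => hasDerivAt_pi.2 (h i)

theorem hasDerivAt_along_line_of_forall_hasDerivAt_zero {E F : Type*} [AddCommGroup E]
    [Module ℝ E] [NormedAddCommGroup F] [NormedSpace ℝ F] {g g' : E → F} {v : E}
    (h : ∀ x, HasDerivAt (fun t : ℝ => g (x + t • v)) (g' x) 0) (x : E) (t : ℝ) :
    HasDerivAt (fun s : ℝ => g (x + s • v)) (g' (x + t • v)) t := by
  convert (sub_self t ▸ h (x + t • v)).comp_sub_const t t using 3 with s
  simp only [add_assoc, ← add_smul, add_sub_cancel]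

theorem norm_le_exp_sub_one_of_norm_deriv_le {E : Type*} [NormedAddCommGroup E]
    [NormedSpace ℝ E] {G G' : ℝ → E} {a T : ℝ} (hT : 0 ≤ T) (hG : ∀ t, HasDerivAt G (G' t) t)
    (h0 : G 0 = 0) (hbound : ∀ t ∈ Ico 0 T, ‖G' t‖ ≤ a * ‖G t‖ + a) :
    ‖G T‖ ≤ Real.exp (a * T) - 1 := by
  have hcont : ContinuousOn G (Icc 0 T) :=
    (continuous_iff_continuousAt.2 fun t => (hG t).continuousAt).continuousOn
  have := norm_le_gronwallBound_of_norm_deriv_right_le hcont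
    (fun t _ => (hG t).hasDerivWithinAt) (by rw [h0, norm_zero]) hbound T ⟨hT, le_rfl⟩
  rcases eq_or_ne a 0 with rfl | ha
  · simpa [gronwallBound_K0] using this
  · simpa [gronwallBound_of_K_ne_0 ha, ha] using this

theorem Matrix.norm_mul_le_of_isUnit {m : Type*} [Fintype m] [DecidableEq m]
    {B : Matrix m m ℝ} (hB : IsUnit B) (C D : Matrix m m ℝ) :
    ‖C * D‖ ≤ ‖C * B - 1‖ * ‖B⁻¹ * D‖ + ‖B⁻¹ * D‖ := by
  have hdecomp : C * D = (C * B - 1) * (B⁻¹ * D) + B⁻¹ * D := by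
    rw [sub_mul, one_mul, sub_add_cancel, mul_assoc, ← mul_assoc B,
      Matrix.mul_nonsing_inv _ ((Matrix.isUnit_iff_isUnit_det _).1 hB), one_mul]
  calc ‖C * D‖ ≤ ‖(C * B - 1) * (B⁻¹ * D)‖ + ‖B⁻¹ * D‖ := hdecomp ▸ norm_add_le _ _
    _ ≤ ‖C * B - 1‖ * ‖B⁻¹ * D‖ + ‖B⁻¹ * D‖ := by gcongr; exact norm_mul_le _ _

theorem matrix_mvt_general (n k : ℕ) (lam : ℝ) (hlam : 0 < lam)
    (f : EuclideanSpace ℝ (Fin n) → Matrix (Fin k) (Fin k) ℝ)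
    (Df : EuclideanSpace ℝ (Fin n) → EuclideanSpace ℝ (Fin n) → Matrix (Fin k) (Fin k) ℝ)
    (hderiv : ∀ x v i j, HasDerivAt (fun t : ℝ => f (x + t • v) i j) (Df x v i j) 0)
    (hinv : ∀ x, IsUnit (f x))
    (hbound : ∀ x v, frob ((f x)⁻¹ * Df x v) ≤ lam * ‖v‖) :
    ∀ x y, dist x y ≤ 1 / (2 * lam) →
      frob ((f x)⁻¹ * f y - 1) ≤ 2 * lam * dist x y := by
  intro x y hxy
  set v := y - x
  set a := lam * ‖v‖
  have hdist : dist x y = ‖v‖ := by rw [dist_comm, dist_eq_norm]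
  have ha : |a| ≤ 1 / 2 := by
    rw [abs_of_nonneg (by positivity)]
    calc a ≤ lam * (1 / (2 * lam)) := mul_le_mul_of_nonneg_left (hdist ▸ hxy) hlam.le
      _ = 1 / 2 := by field_simp
  have hG : ∀ t : ℝ, HasDerivAt (fun s : ℝ => (f x)⁻¹ * f (x + s • v) - 1)
      ((f x)⁻¹ * Df (x + t • v) v) t := fun t =>
    ((hasDerivAt_along_line_of_forall_hasDerivAt_zero
      (fun z => Matrix.hasDerivAt_of_hasDerivAt_apply (hderiv z v)) x t).const_mul _).sub_const 1
  have hG0 : (f x)⁻¹ * f (x + (0 : ℝ) • v) - 1 = 0 := by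
    rw [zero_smul, add_zero, Matrix.nonsing_inv_mul _ ((Matrix.isUnit_iff_isUnit_det _).1 (hinv x)),
      sub_self]
  have hG' : ∀ t ∈ Ico (0 : ℝ) 1, ‖(f x)⁻¹ * Df (x + t • v) v‖ ≤
      a * ‖(f x)⁻¹ * f (x + t • v) - 1‖ + a := fun t _ => by
    have hb : ‖(f (x + t • v))⁻¹ * Df (x + t • v) v‖ ≤ a := by
      simpa only [frob_eq_norm] using hbound (x + t • v) v
    calc _ ≤ _ := Matrix.norm_mul_le_of_isUnit (hinv (x + t • v)) _ _
      _ ≤ ‖(f x)⁻¹ * f (x + t • v) - 1‖ * a + a := by gcongr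
      _ = _ := by ring
  have key := norm_le_exp_sub_one_of_norm_deriv_le zero_le_one hG hG0 hG'
  rw [one_smul, mul_one, add_sub_cancel] at key
  rw [frob_eq_norm, hdist, mul_assoc]
  calc _ ≤ Real.exp a - 1 := key
    _ ≤ |Real.exp a - 1| := le_abs_self _
    _ ≤ 2 * |a| := Real.abs_exp_sub_one_le (ha.trans (by norm_num))
    _ = 2 * a := by rw [abs_of_nonneg (by positivity)]

/-- If `f : ℝⁿ → GL_k(ℝ)` is smooth with `|f(x)⁻¹ ∂_v f(x)| ≤ λ |v|` everywhere,
then `|f(x)⁻¹ f(y) − I| ≤ 2 λ |x − y|` whenever `|x − y| ≤ 1/(2λ)`. -/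
theorem matrix_mvt (n k : ℕ) (lam : ℝ) (hlam : 0 < lam)
    (f : EuclideanSpace ℝ (Fin n) → Matrix (Fin k) (Fin k) ℝ)
    (Df : EuclideanSpace ℝ (Fin n) → EuclideanSpace ℝ (Fin n) → Matrix (Fin k) (Fin k) ℝ)
    (hderiv : ∀ x v i j, HasDerivAt (fun t : ℝ => f (x + t • v) i j) (Df x v i j) 0)
    (hcont : ∀ v i j, Continuous fun x => Df x v i j)
    (hinv : ∀ x, IsUnit (f x))
    (hbound : ∀ x v, frob ((f x)⁻¹ * Df x v) ≤ lam * ‖v‖) :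
    ∀ x y, dist x y ≤ 1 / (2 * lam) →
      frob ((f x)⁻¹ * f y - 1) ≤ 2 * lam * dist x y :=
  matrix_mvt_general n k lam hlam f Df hderiv hinv hbound
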